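/- Let c ≥ 1 and d ≥ 0 be integers. For every word w ∈ 𝓛_std, writing η(w) = (x^u, (p_1,…,p_d)), the tuple is strictly increasing: p_1 < p_2 < ⋯ < p_d. Hence η induces a map 𝓛_std → Mon(P) × Hom_OI([d],ℕ), where Hom_OI([d],ℕ) denotes strictly increasing maps [d] → ℕ. -/
import Mathlib


noncomputable section
open scoped Computability

/-- The alphabet `Σ = {ξ_1,…,ξ_c, τ_0,…,τ_d}`. -/
inductive Letter (c d : ℕ) : Type
  | xi : Fin c → Letter c d
  | tau : Fin (d + 1) → Letter c d
deriving DecidableEq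

/-- A word is *standard* if in every occurrence of two consecutive ξ-letters
`ξ_i ξ_j` one has `i ≤ j`. -/
def Standard {c d : ℕ} : List (Letter c d) → Prop :=
  List.Chain' fun a b => ∀ i j : Fin c, a = Letter.xi i → b = Letter.xi j → (i : ℕ) ≤ (j : ℕ)

/-- A *simple* word contains no τ-letters. -/
def SimpleWord {c d : ℕ} (w : List (Letter c d)) : Prop :=
  ∀ a ∈ w, ∃ i, a = Letter.xi i

/-- Test for τ-letters. -/
def isTau {c d : ℕ} : Letter c d → Bool
  | Letter.tau _ => true
  | Letter.xi _ => false

/-- The number of τ-letters occurring in a word. -/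
def tauCount {c d : ℕ} (w : List (Letter c d)) : ℕ := (w.filter isTau).length

/-- The language of one-letter words with letter drawn from `S`. -/
def letterLang {c d : ℕ} (S : Set (Letter c d)) : Language (Letter c d) :=
  {w | ∃ a ∈ S, w = [a]}

/-- The set of ξ-letters. -/
def xiSet (c d : ℕ) : Set (Letter c d) := Set.range Letter.xi

/-- The language `𝓛_j = {ξ_1,…,ξ_c, τ_j}*`. -/
def LL (c d : ℕ) (j : Fin (d + 1)) : Language (Letter c d) :=
  (letterLang (xiSet c d ∪ {Letter.tau j}))∗

/-- The language `𝓛̄_j = ({ξ_1,…,ξ_c}* τ_j)*`. -/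
def LLbar (c d : ℕ) (j : Fin (d + 1)) : Language (Letter c d) :=
  ((letterLang (xiSet c d))∗ * ({[Letter.tau j]} : Language (Letter c d)))∗

/-- The language `𝓛 = 𝓛_1 τ_1 𝓛_2 τ_2 ⋯ 𝓛_d τ_d 𝓛̄_0`. -/
def LFull (c d : ℕ) : Language (Letter c d) :=
  (((List.finRange d).map fun j : Fin d =>
      LL c d j.succ * ({[Letter.tau j.succ]} : Language (Letter c d))).prod) * LLbar c d 0

/-- The language `𝓛_std` of standard words of `𝓛`. -/
def LStd (c d : ℕ) : Language (Letter c d) :=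
  {w | w ∈ LFull c d ∧ Standard w}

/-- Monomials of `P = (X^{OI,1})^{⊗c}` (of arbitrary width), encoded by their exponent
vectors: `u (i, l)` is the exponent of the variable `x_{i,l+1}`. -/
abbrev MonP (c : ℕ) : Type := (Fin c × ℕ) →₀ ℕ

/-- Shift all variables one column to the right: `x_{k,l} ↦ x_{k,l+1}`. -/
def shiftMon {c : ℕ} (u : MonP c) : MonP c :=
  Finsupp.mapDomain (fun v : Fin c × ℕ => (v.1, v.2 + 1)) u

/-- The shifting operator `T_i`: on the monomial it sends `x_{k,l} ↦ x_{k,l+1}`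
(multiplicatively), and on a tuple `(p_1,…,p_d)` it adds `1` to `p_j` for `j ≥ i`
(1-based `j`), while `T_0` leaves the tuple unchanged. -/
def TOp {c d : ℕ} (i : Fin (d + 1)) (q : MonP c × (Fin d → ℕ)) : MonP c × (Fin d → ℕ) :=
  (shiftMon q.1,
    fun k => if 1 ≤ (i : ℕ) ∧ (i : ℕ) ≤ (k : ℕ) + 1 then q.2 k + 1 else q.2 k)

/-- The map `η : Σ* → Mon(P) × ℕ^d`:  `η(e) = (1,(0,…,0))`, `η(ξ_i w) = x_{i,1}·η(w)`,
`η(τ_i w) = T_i(η(w))`. -/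
def eta {c d : ℕ} : List (Letter c d) → MonP c × (Fin d → ℕ)
  | [] => (0, fun _ => 0)
  | Letter.xi i :: w => (Finsupp.single ((i : Fin c), (0 : ℕ)) 1 + (eta w).1, (eta w).2)
  | Letter.tau i :: w => TOp i (eta w)



namespace EtaAux
variable {c d : ℕ}

def pred (k : ℕ) : Letter c d → Bool
  | Letter.tau i => decide (1 ≤ (i : ℕ) ∧ (i : ℕ) ≤ k)
  | _ => false

def cnt (k : ℕ) (w : List (Letter c d)) : ℕ := (w.filter (pred k)).length

lemma eta_snd (w : List (Letter c d)) (j : Fin d) :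
    (eta w).2 j = cnt ((j : ℕ) + 1) w := by
  induction w with
  | nil => simp [eta, cnt, pred]
  | cons a t ih =>
    cases a with
    | xi i => simpa [eta, cnt, pred] using ih
    | tau i =>
      simp only [eta, TOp, cnt, pred, List.filter_cons]
      by_cases h : 1 ≤ (i : ℕ) ∧ (i : ℕ) ≤ (j : ℕ) + 1
      · simp [h, ih, cnt, pred]
      · simp [h, ih, cnt, pred]

lemma pred_tau {k : ℕ} {i : Fin (d + 1)} :
    pred k (Letter.tau i : Letter c d) = true ↔ (1 ≤ (i : ℕ) ∧ (i : ℕ) ≤ k) := by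
  simp [pred]

lemma cnt_cons (k : ℕ) (a : Letter c d) (t : List (Letter c d)) :
    cnt k (a :: t) = (if pred k a = true then 1 else 0) + cnt k t := by
  simp only [cnt, List.filter_cons]
  split <;> simp [Nat.add_comm]

lemma pred_mono {k k' : ℕ} (h : k ≤ k') {a : Letter c d} (ha : pred k a = true) :
    pred k' a = true := by
  cases a <;> simp [pred] at * <;> omega

lemma cnt_le {k k' : ℕ} (h : k ≤ k') (w : List (Letter c d)) : cnt k w ≤ cnt k' w := by
  induction w with
  | nil => simp [cnt]
  | cons a t ih =>
    rw [cnt_cons, cnt_cons]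
    by_cases h1 : pred k a = true
    · rw [if_pos h1, if_pos (pred_mono h h1)]; omega
    · rw [if_neg h1]; split <;> omega

lemma cnt_lt {k : ℕ} {i : Fin (d + 1)} {w : List (Letter c d)}
    (hw : Letter.tau i ∈ w) (hi : (i : ℕ) = k + 1) : cnt k w < cnt (k + 1) w := by
  induction w with
  | nil => simp at hw
  | cons a t ih =>
    rw [cnt_cons, cnt_cons]
    rcases List.mem_cons.mp hw with h | h
    · subst h
      have h1 : ¬ pred k (Letter.tau i : Letter c d) = true := by
        rw [pred_tau]; omega
      have h2 : pred (k + 1) (Letter.tau i : Letter c d) = true := by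
        rw [pred_tau]; omega
      rw [if_neg h1, if_pos h2]
      have := cnt_le (show k ≤ k + 1 by omega) t
      omega
    · have := ih h
      by_cases h1 : pred k a = true
      · rw [if_pos h1, if_pos (pred_mono (Nat.le_succ k) h1)]; omega
      · rw [if_neg h1]; split <;> omega

lemma mem_of_mem_listProd (a : Letter c d) (L : List (Language (Letter c d)))
    (A : Language (Letter c d)) (hA : A ∈ L) (h : ∀ x ∈ A, a ∈ x) :
    ∀ w ∈ L.prod, a ∈ w := by
  induction L with
  | nil => simp at hA
  | cons B L ih =>
    intro w hw
    rw [List.prod_cons] at hw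
    obtain ⟨u, hu, v, hv, rfl⟩ := Language.mem_mul.mp hw
    rcases List.mem_cons.mp hA with rfl | hA'
    · exact List.mem_append.mpr (Or.inl (h u hu))
    · exact List.mem_append.mpr (Or.inr (ih hA' v hv))

lemma tau_mem {w : List (Letter c d)} (hw : w ∈ LFull c d) (j : Fin d) :
    Letter.tau j.succ ∈ w := by
  obtain ⟨u, hu, v, hv, rfl⟩ := Language.mem_mul.mp hw
  refine List.mem_append.mpr (Or.inl ?_)
  refine mem_of_mem_listProd _ _ (LL c d j.succ * ({[Letter.tau j.succ]} : Language (Letter c d)))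
    ?_ ?_ u hu
  · exact List.mem_map.mpr ⟨j, List.mem_finRange j, rfl⟩
  · intro x hx
    obtain ⟨p, hp, q, hq, rfl⟩ := Language.mem_mul.mp hx
    have : q = [Letter.tau j.succ] := hq
    subst this
    simp

end EtaAux

/-- **`η` induces a map `𝓛_std → Mon(P) × Hom_OI([d],ℕ)`** (Lemma 3.2).
For every standard word `w ∈ 𝓛_std`, writing `η(w) = (x^u, (p_1,…,p_d))`, the tuple is
strictly increasing: `p_1 < p_2 < ⋯ < p_d`; that is, the second component of `η(w)` is a
strictly increasing map `[d] → ℕ`. -/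
theorem eta_snd_strictMono_of_mem_LStd (c d : ℕ) (hc : 1 ≤ c)
    (w : List (Letter c d)) (hw : w ∈ LStd c d) :
    StrictMono (eta w).2 := by
  rcases d with _ | d
  · intro a; exact absurd a.2 (by omega)
  rw [Fin.strictMono_iff_lt_succ]
  intro i
  have ht : Letter.tau i.succ.succ ∈ w := EtaAux.tau_mem hw.1 i.succ
  rw [EtaAux.eta_snd, EtaAux.eta_snd]
  have hcast : ((Fin.castSucc i : Fin (d+1)) : ℕ) = (i : ℕ) := rfl
  have hsucc : ((i.succ : Fin (d+1)) : ℕ) = (i : ℕ) + 1 := rfl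
  rw [hcast, hsucc]
  exact EtaAux.cnt_lt ht (by simp [Fin.val_succ])


end
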